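/- Let π^ag be a randomized policy such that for each round i and every partial realization ψ_{i-1}, the conditional expected marginal gain of its i-th selection satisfies E_ω[Δ(π^ag(ω, ψ_{i-1}) | ψ_{i-1})] ≥ α_i · max_e Δ(e | ψ_{i-1}). If f is adaptive monotone and adaptive submodular, then for any randomized policy π* selecting at most r items and any 0 ≤ i < r: E_ω[f_avg(π*(ω)) − f_avg(π^ag_i(ω))] ≤ (1 − α_i/r) · E_ω[f_avg(π*(ω)) − f_avg(π^ag_{i-1}(ω))]. -/

import Mathlib

/-!
Running `π*` after the first `i - 1` greedy steps can only help (adaptive monotonicity), and by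
adaptive submodularity each of the at most `r` items it adds gains at most the best single-item
gain at the greedy history `Ψ_{i-1}`; hence
`f_avg(π*) ≤ f_avg(π^ag_{i-1}) + r · E[max_e Δ(e | Ψ_{i-1})]`.
Summed over the histories reached, the greedy hypothesis says that step `i` gains at least
`α_i · E[max_e Δ(e | Ψ_{i-1})]`, and the two bounds combine into the contraction. Both gain
computations rest on the tower property: the average of `Δ(e | Ψ)` over the realizations that
produce the history `Ψ` is their unconditional expected gain.
-/

open Finset
open scoped Classical

section Adaptive

variable {E O : Type*} [Fintype E] [Fintype O] [DecidableEq E] [Nonempty E]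

/-- A partial realization: a partial assignment of states to items. -/
abbrev PReal (E O : Type*) := E → Option O

/-- A (full) realization `φ` is consistent with a partial realization `ψ`
(written `φ ∼ ψ`) if `φ` agrees with `ψ` on the domain of `ψ`. -/
def consistentR (φ : E → O) (ψ : PReal E O) : Prop := ∀ e o, ψ e = some o → φ e = o

/-- The domain of a partial realization, i.e. the set of items already selected. -/
noncomputable def pdom (ψ : PReal E O) : Finset E :=
  Finset.univ.filter fun e => (ψ e).isSome

/-- The probability `Pr[Φ ∼ ψ]` that the random realization is consistent with `ψ`. -/
noncomputable def prMass (p : (E → O) → ℝ) (ψ : PReal E O) : ℝ :=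
  ∑ φ ∈ Finset.univ.filter (fun φ => consistentR φ ψ), p φ

/-- The conditional expected marginal benefit `Δ(e | ψ)` of item `e` given the
partial realization `ψ`. -/
noncomputable def marginal (p : (E → O) → ℝ) (f : Finset E → (E → O) → ℝ)
    (e : E) (ψ : PReal E O) : ℝ :=
  (∑ φ ∈ Finset.univ.filter (fun φ => consistentR φ ψ),
      p φ * (f (insert e (pdom ψ)) φ - f (pdom ψ) φ)) / prMass p ψ

/-- `max_e Δ(e | ψ)`, the best single-item conditional marginal benefit. -/
noncomputable def maxMarginal (p : (E → O) → ℝ) (f : Finset E → (E → O) → ℝ)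
    (ψ : PReal E O) : ℝ :=
  Finset.univ.sup' Finset.univ_nonempty (fun e => marginal p f e ψ)

/-- Adaptive monotonicity: `Δ(e | ψ) ≥ 0` for every `e` and every `ψ` with
`Pr[Φ ∼ ψ] > 0`. -/
def AdaptiveMonotone (p : (E → O) → ℝ) (f : Finset E → (E → O) → ℝ) : Prop :=
  ∀ ψ : PReal E O, 0 < prMass p ψ → ∀ e : E, 0 ≤ marginal p f e ψ

/-- `ψ` is a subrealization of `ψ'`. -/
def subreal (ψ ψ' : PReal E O) : Prop := ∀ e o, ψ e = some o → ψ' e = some o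

/-- Adaptive submodularity: `Δ(e | ψ) ≥ Δ(e | ψ')` whenever `ψ ⊆ ψ'` and
`e ∉ dom(ψ')`. -/
def AdaptiveSubmodular (p : (E → O) → ℝ) (f : Finset E → (E → O) → ℝ) : Prop :=
  ∀ ψ ψ' : PReal E O, subreal ψ ψ' → ∀ e ∉ pdom ψ', marginal p f e ψ' ≤ marginal p f e ψ

/-- A deterministic adaptive policy: picks the next item from the current
partial realization. -/
abbrev Policy (E O : Type*) := PReal E O → E

/-- `runP π φ i = Ψ_i(π, φ)`: the partial realization observed after policy `π`
selects its first `i` items under realization `φ`. -/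
noncomputable def runP (π : Policy E O) (φ : E → O) : ℕ → PReal E O
  | 0 => fun _ => none
  | (i + 1) =>
      Function.update (runP π φ i) (π (runP π φ i)) (some (φ (π (runP π φ i))))

/-- `favg p f π i = f_avg(π_i)`: the expected utility of the truncated policy `π_i`. -/
noncomputable def favg (p : (E → O) → ℝ) (f : Finset E → (E → O) → ℝ)
    (π : Policy E O) (i : ℕ) : ℝ :=
  ∑ φ : E → O, p φ * f (pdom (runP π φ i)) φ

end Adaptive

section PartialRealization

variable {E O : Type*}

def pmerge (ψ₁ ψ₂ : PReal E O) : PReal E O := fun e => (ψ₁ e).or (ψ₂ e)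

lemma subreal_pmerge_left (ψ₁ ψ₂ : PReal E O) : subreal ψ₁ (pmerge ψ₁ ψ₂) := by
  intro e o h
  simp [pmerge, h]

lemma consistentR_of_subreal {φ : E → O} {ψ ψ' : PReal E O} (h : subreal ψ ψ')
    (hφ : consistentR φ ψ') : consistentR φ ψ :=
  fun e o he => hφ e o (h e o he)

lemma consistentR_pmerge_iff {φ₀ φ : E → O} {ψ₁ ψ₂ : PReal E O}
    (h₁ : consistentR φ₀ ψ₁) (h₂ : consistentR φ₀ ψ₂) :
    consistentR φ (pmerge ψ₁ ψ₂) ↔ consistentR φ ψ₁ ∧ consistentR φ ψ₂ := by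
  refine ⟨fun h => ⟨consistentR_of_subreal (subreal_pmerge_left ψ₁ ψ₂) h, fun e o he => ?_⟩,
    fun ⟨hφ₁, hφ₂⟩ e o he => ?_⟩
  · cases he₁ : ψ₁ e with
    | none => exact h e o (by simp [pmerge, he₁, he])
    | some o' =>
      obtain rfl : o' = o := by rw [← h₁ e o' he₁, h₂ e o he]
      exact h e o' (by simp [pmerge, he₁])
  · cases he₁ : ψ₁ e with
    | none => exact hφ₂ e o (by simpa [pmerge, he₁] using he)
    | some o' => exact hφ₁ e o (by simpa [pmerge, he₁] using he)

lemma pdom_pmerge [Fintype E] [DecidableEq E] (ψ₁ ψ₂ : PReal E O) :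
    pdom (pmerge ψ₁ ψ₂) = pdom ψ₁ ∪ pdom ψ₂ := by
  ext e
  simp [pdom, pmerge, Option.isSome_or]

lemma pdom_update [Fintype E] [DecidableEq E] (ψ : PReal E O) (e : E) (o : O) :
    pdom (Function.update ψ e (some o)) = insert e (pdom ψ) := by
  ext a
  by_cases h : a = e <;> simp [pdom, Function.update, h]

/-- The realizations consistent with the observation `s φ` are exactly those producing the
same observation, so conditioning on `Φ ∼ s φ` is conditioning on the value of `s`. -/
def IsHistory (s : (E → O) → PReal E O) : Prop :=
  ∀ φ φ', consistentR φ' (s φ) ↔ s φ' = s φ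

lemma IsHistory.consistentR_self {s : (E → O) → PReal E O} (hs : IsHistory s) (φ : E → O) :
    consistentR φ (s φ) :=
  (hs φ φ).2 rfl

lemma IsHistory.consistentR_pmerge_iff {s₁ s₂ : (E → O) → PReal E O} (h₁ : IsHistory s₁)
    (h₂ : IsHistory s₂) (φ φ' : E → O) :
    consistentR φ' (pmerge (s₁ φ) (s₂ φ)) ↔ s₁ φ' = s₁ φ ∧ s₂ φ' = s₂ φ := by
  rw [_root_.consistentR_pmerge_iff (h₁.consistentR_self φ) (h₂.consistentR_self φ), h₁, h₂]

lemma IsHistory.pmerge {s₁ s₂ : (E → O) → PReal E O} (h₁ : IsHistory s₁) (h₂ : IsHistory s₂) :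
    IsHistory fun φ => pmerge (s₁ φ) (s₂ φ) := by
  intro φ φ'
  dsimp only
  rw [h₁.consistentR_pmerge_iff h₂]
  refine ⟨fun ⟨e₁, e₂⟩ => by rw [e₁, e₂], fun h => ?_⟩
  rw [← h₁.consistentR_pmerge_iff h₂ φ φ', ← h]
  exact (h₁.consistentR_pmerge_iff h₂ φ' φ').2 ⟨rfl, rfl⟩

end PartialRealization

section Run

variable {E O : Type*} [DecidableEq E]

lemma consistentR_runP (π : Policy E O) (φ : E → O) (k : ℕ) : consistentR φ (runP π φ k) := by
  induction k with
  | zero => intro e o h; simp [runP] at h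
  | succ k ih =>
    intro e o h
    by_cases he : e = π (runP π φ k)
    · subst he
      simp only [runP, Function.update_self, Option.some.injEq] at h
      exact h
    · simp only [runP, Function.update_of_ne he] at h
      exact ih e o h

lemma subreal_runP_succ (π : Policy E O) (φ : E → O) (k : ℕ) :
    subreal (runP π φ k) (runP π φ (k + 1)) := by
  intro e o h
  by_cases he : e = π (runP π φ k)
  · subst he
    simp [runP, consistentR_runP π φ k _ _ h]
  · simp [runP, Function.update_of_ne he, h]

lemma isHistory_runP (π : Policy E O) (k : ℕ) : IsHistory fun φ => runP π φ k := by
  intro φ φ'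
  refine ⟨fun h => ?_, fun h => h ▸ consistentR_runP π φ' k⟩
  induction k with
  | zero => rfl
  | succ k ih =>
    have hk := ih (consistentR_of_subreal (subreal_runP_succ π φ k) h)
    have hnew : φ' (π (runP π φ k)) = φ (π (runP π φ k)) := h _ _ (by simp [runP])
    simp only [runP, hk, hnew]

lemma pdom_runP_zero [Fintype E] (π : Policy E O) (φ : E → O) : pdom (runP π φ 0) = ∅ := by
  simp [pdom, runP]

lemma pdom_runP_succ [Fintype E] (π : Policy E O) (φ : E → O) (k : ℕ) :
    pdom (runP π φ (k + 1)) = insert (π (runP π φ k)) (pdom (runP π φ k)) :=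
  pdom_update _ _ _

end Run

section Marginal

variable {E O : Type*} [Fintype E] [Fintype O] [DecidableEq E]
variable {p : (E → O) → ℝ} {f : Finset E → (E → O) → ℝ}

lemma le_prMass (hp : ∀ φ, 0 ≤ p φ) {φ : E → O} {ψ : PReal E O} (hφ : consistentR φ ψ) :
    p φ ≤ prMass p ψ :=
  Finset.single_le_sum (fun φ _ => hp φ) (by simpa using hφ)

lemma prMass_anti (hp : ∀ φ, 0 ≤ p φ) {ψ ψ' : PReal E O} (h : subreal ψ ψ') :
    prMass p ψ' ≤ prMass p ψ :=
  Finset.sum_le_sum_of_subset_of_nonneg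
    (fun φ hφ => by simpa using consistentR_of_subreal h (by simpa using hφ))
    (fun φ _ _ => hp φ)

lemma marginal_of_mem {e : E} {ψ : PReal E O} (he : e ∈ pdom ψ) : marginal p f e ψ = 0 := by
  simp [marginal, Finset.insert_eq_of_mem he]

lemma marginal_le_maxMarginal [Nonempty E] (e : E) (ψ : PReal E O) :
    marginal p f e ψ ≤ maxMarginal p f ψ :=
  Finset.le_sup' (fun e => marginal p f e ψ) (Finset.mem_univ e)

lemma mul_marginal_nonneg (hp : ∀ φ, 0 ≤ p φ) (hmono : AdaptiveMonotone p f) {φ : E → O}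
    {ψ : PReal E O} (hφ : consistentR φ ψ) (e : E) : 0 ≤ p φ * marginal p f e ψ := by
  rcases (hp φ).eq_or_lt with h | h
  · rw [← h, zero_mul]
  · exact mul_nonneg (hp φ) (hmono ψ (h.trans_le (le_prMass hp hφ)) e)

lemma mul_marginal_le_mul_maxMarginal [Nonempty E] (hp : ∀ φ, 0 ≤ p φ)
    (hmono : AdaptiveMonotone p f) (hsub : AdaptiveSubmodular p f) {φ : E → O}
    {ψ ψ' : PReal E O} (hψ : subreal ψ ψ') (hφ : consistentR φ ψ') (e : E) :
    p φ * marginal p f e ψ' ≤ p φ * maxMarginal p f ψ := by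
  rcases (hp φ).eq_or_lt with h | h
  · rw [← h, zero_mul, zero_mul]
  refine mul_le_mul_of_nonneg_left ?_ (hp φ)
  by_cases he : e ∈ pdom ψ'
  · have hψpos : 0 < prMass p ψ := h.trans_le ((le_prMass hp hφ).trans (prMass_anti hp hψ))
    rw [marginal_of_mem he]
    exact (hmono ψ hψpos e).trans (marginal_le_maxMarginal e ψ)
  · exact (hsub ψ ψ' hψ e he).trans (marginal_le_maxMarginal e ψ)

/-- The tower property of the conditional expectation `marginal`. -/
lemma IsHistory.sum_mul_marginal (hp : ∀ φ, 0 ≤ p φ) {s : (E → O) → PReal E O}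
    (hs : IsHistory s) (e : (E → O) → E) (he : ∀ φ φ', s φ' = s φ → e φ' = e φ) :
    ∑ φ, p φ * marginal p f (e φ) (s φ)
      = ∑ φ, p φ * (f (insert (e φ) (pdom (s φ))) φ - f (pdom (s φ)) φ) := by
  set gain : (E → O) → ℝ := fun φ => p φ * (f (insert (e φ) (pdom (s φ))) φ - f (pdom (s φ)) φ)
  set mass : PReal E O → ℝ := fun ψ => ∑ φ with s φ = ψ, p φ
  set total : PReal E O → ℝ := fun ψ => ∑ φ with s φ = ψ, gain φ
  have hfiber : ∀ φ, marginal p f (e φ) (s φ) = total (s φ) / mass (s φ) := by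
    intro φ
    have hset : (Finset.univ.filter fun φ' => consistentR φ' (s φ))
        = Finset.univ.filter fun φ' => s φ' = s φ :=
      Finset.filter_congr fun φ' _ => hs φ φ'
    rw [marginal, prMass, hset]
    refine congrArg (· / _) (Finset.sum_congr rfl fun φ' hφ' => ?_)
    have h' : s φ' = s φ := (Finset.mem_filter.1 hφ').2
    simp only [gain, ← h', he φ φ' h']
  -- on a null fibre `marginal` is the junk value `x / 0 = 0`, but then every `p φ` there is `0`
  have hcancel : ∀ ψ, mass ψ * (total ψ / mass ψ) = total ψ := fun ψ =>
    mul_div_cancel_of_imp' fun h0 => Finset.sum_eq_zero fun φ hφ => by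
      show p φ * _ = 0
      rw [(Finset.sum_eq_zero_iff_of_nonneg fun φ _ => hp φ).1 h0 φ hφ, zero_mul]
  rw [← Finset.sum_fiberwise Finset.univ s gain, ← Finset.sum_fiberwise Finset.univ s]
  refine Finset.sum_congr rfl fun ψ _ => ?_
  calc ∑ φ with s φ = ψ, p φ * marginal p f (e φ) (s φ)
      = ∑ φ with s φ = ψ, p φ * (total ψ / mass ψ) :=
        Finset.sum_congr rfl fun φ hφ => by rw [hfiber, (Finset.mem_filter.1 hφ).2]
    _ = total ψ := by rw [← Finset.sum_mul, hcancel]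

end Marginal

section Policy

variable {E O : Type*} [Fintype E] [Fintype O] [DecidableEq E]
variable {p : (E → O) → ℝ} {f : Finset E → (E → O) → ℝ}

lemma favg_succ_sub_favg (hp : ∀ φ, 0 ≤ p φ) (π : Policy E O) (j : ℕ) :
    favg p f π (j + 1) - favg p f π j
      = ∑ φ, p φ * marginal p f (π (runP π φ j)) (runP π φ j) := by
  rw [(isHistory_runP π j).sum_mul_marginal hp (fun φ => π (runP π φ j))
    fun φ φ' h => congrArg π h]
  simp only [favg, ← Finset.sum_sub_distrib, mul_sub, pdom_runP_succ]

/-- `f_avg(π₁ @ π₂)`, the expected utility of the items chosen by `π₁` in `j` steps together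
with those chosen by `π₂`, run from scratch, in `k` steps. -/
noncomputable def favgConcat (p : (E → O) → ℝ) (f : Finset E → (E → O) → ℝ)
    (π₁ : Policy E O) (j : ℕ) (π₂ : Policy E O) (k : ℕ) : ℝ :=
  ∑ φ, p φ * f (pdom (runP π₁ φ j) ∪ pdom (runP π₂ φ k)) φ

lemma favgConcat_zero (π₁ π₂ : Policy E O) (j : ℕ) :
    favgConcat p f π₁ j π₂ 0 = favg p f π₁ j := by
  simp only [favgConcat, favg, pdom_runP_zero, Finset.union_empty]

lemma favgConcat_comm (π₁ π₂ : Policy E O) (j k : ℕ) :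
    favgConcat p f π₁ j π₂ k = favgConcat p f π₂ k π₁ j := by
  simp only [favgConcat, Finset.union_comm]

lemma favgConcat_succ_sub (hp : ∀ φ, 0 ≤ p φ) (π₁ π₂ : Policy E O) (j k : ℕ) :
    favgConcat p f π₁ j π₂ (k + 1) - favgConcat p f π₁ j π₂ k
      = ∑ φ, p φ * marginal p f (π₂ (runP π₂ φ k)) (pmerge (runP π₁ φ j) (runP π₂ φ k)) := by
  have h₁ := isHistory_runP π₁ j
  have h₂ := isHistory_runP π₂ k
  rw [(h₁.pmerge h₂).sum_mul_marginal hp (fun φ => π₂ (runP π₂ φ k)) fun φ φ' h =>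
    congrArg π₂ ((h₁.consistentR_pmerge_iff h₂ φ φ').1 (((h₁.pmerge h₂) φ φ').2 h)).2]
  simp only [favgConcat, ← Finset.sum_sub_distrib, mul_sub, pdom_pmerge, pdom_runP_succ,
    Finset.union_insert]

lemma favgConcat_monotone (hp : ∀ φ, 0 ≤ p φ) (hmono : AdaptiveMonotone p f)
    (π₁ π₂ : Policy E O) (j : ℕ) : Monotone (favgConcat p f π₁ j π₂) := by
  refine monotone_nat_of_le_succ fun k => sub_nonneg.1 ?_
  rw [favgConcat_succ_sub hp]
  exact Finset.sum_nonneg fun φ _ => mul_marginal_nonneg hp hmono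
    (((isHistory_runP π₁ j).pmerge (isHistory_runP π₂ k)).consistentR_self φ) _

lemma favgConcat_le [Nonempty E] (hp : ∀ φ, 0 ≤ p φ) (hmono : AdaptiveMonotone p f)
    (hsub : AdaptiveSubmodular p f) (π₁ π₂ : Policy E O) (j k : ℕ) :
    favgConcat p f π₁ j π₂ k
      ≤ favg p f π₁ j + k * ∑ φ, p φ * maxMarginal p f (runP π₁ φ j) := by
  induction k with
  | zero => simp [favgConcat_zero]
  | succ k ih =>
    have hstep : favgConcat p f π₁ j π₂ (k + 1) - favgConcat p f π₁ j π₂ k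
        ≤ ∑ φ, p φ * maxMarginal p f (runP π₁ φ j) := by
      rw [favgConcat_succ_sub hp]
      exact Finset.sum_le_sum fun φ _ => mul_marginal_le_mul_maxMarginal hp hmono hsub
        (subreal_pmerge_left _ _)
        (((isHistory_runP π₁ j).pmerge (isHistory_runP π₂ k)).consistentR_self φ) _
    push_cast
    linarith

lemma favg_le_favg_add_mul [Nonempty E] (hp : ∀ φ, 0 ≤ p φ) (hmono : AdaptiveMonotone p f)
    (hsub : AdaptiveSubmodular p f) (π π' : Policy E O) (j m : ℕ) :
    favg p f π' m ≤ favg p f π j + m * ∑ φ, p φ * maxMarginal p f (runP π φ j) :=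
  calc favg p f π' m = favgConcat p f π' m π 0 := (favgConcat_zero π' π m).symm
    _ ≤ favgConcat p f π' m π j := favgConcat_monotone hp hmono π' π m (Nat.zero_le j)
    _ = favgConcat p f π j π' m := favgConcat_comm π' π m j
    _ ≤ _ := favgConcat_le hp hmono hsub π π' j m

end Policy

section Randomized

lemma sum_mul_le_sum_mul_of_fiberwise {Ω K : Type*} [Fintype Ω] [Fintype K] [DecidableEq K]
    (q : Ω → ℝ) (key : Ω → K) (a : K → ℝ) (b : Ω → K → ℝ)
    (h : ∀ k, a k * ∑ ω with key ω = k, q ω ≤ ∑ ω with key ω = k, q ω * b ω k) :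
    ∑ ω, q ω * a (key ω) ≤ ∑ ω, q ω * b ω (key ω) := by
  rw [← Finset.sum_fiberwise Finset.univ key, ← Finset.sum_fiberwise Finset.univ key]
  refine Finset.sum_le_sum fun k _ => ?_
  calc ∑ ω with key ω = k, q ω * a (key ω) = a k * ∑ ω with key ω = k, q ω := by
        rw [Finset.mul_sum]
        exact Finset.sum_congr rfl fun ω hω => by rw [(Finset.mem_filter.1 hω).2, mul_comm]
    _ ≤ ∑ ω with key ω = k, q ω * b ω k := h k
    _ = ∑ ω with key ω = k, q ω * b ω (key ω) :=
        Finset.sum_congr rfl fun ω hω => by rw [(Finset.mem_filter.1 hω).2]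

lemma sum_mul_sub_sum_mul_le {Ω Ω' : Type*} [Fintype Ω] [Fintype Ω'] {q : Ω → ℝ} {q' : Ω' → ℝ}
    (hq : ∀ ω, 0 ≤ q ω) (hq1 : ∑ ω, q ω = 1) (hq' : ∀ ω', 0 ≤ q' ω') (hq'1 : ∑ ω', q' ω' = 1)
    {a : Ω' → ℝ} {b c : Ω → ℝ} (h : ∀ ω ω', a ω' ≤ b ω + c ω) :
    ∑ ω', q' ω' * a ω' - ∑ ω, q ω * b ω ≤ ∑ ω, q ω * c ω := by
  have hmean : ∀ ω, ∑ ω', q' ω' * a ω' ≤ b ω + c ω := fun ω =>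
    calc ∑ ω', q' ω' * a ω' ≤ ∑ ω', q' ω' * (b ω + c ω) :=
          Finset.sum_le_sum fun ω' _ => mul_le_mul_of_nonneg_left (h ω ω') (hq' ω')
      _ = b ω + c ω := by rw [← Finset.sum_mul, hq'1, one_mul]
  calc ∑ ω', q' ω' * a ω' - ∑ ω, q ω * b ω
      = ∑ ω, q ω * (∑ ω', q' ω' * a ω' - b ω) := by
        simp only [mul_sub, Finset.sum_sub_distrib, ← Finset.sum_mul, hq1, one_mul]
    _ ≤ ∑ ω, q ω * c ω :=
        Finset.sum_le_sum fun ω _ => mul_le_mul_of_nonneg_left (by linarith [hmean ω]) (hq ω)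

lemma mul_sum_maxMarginal_le_sum_favg_succ_sub {E O Ω : Type*} [Fintype E] [Fintype O]
    [DecidableEq E] [Nonempty E] [Fintype Ω] {p : (E → O) → ℝ} {f : Finset E → (E → O) → ℝ}
    (hp : ∀ φ, 0 ≤ p φ) (q : Ω → ℝ) (π : Ω → Policy E O) (j : ℕ) (a : ℝ)
    (h : ∀ φ ψ, a * maxMarginal p f ψ * ∑ ω with runP (π ω) φ j = ψ, q ω
      ≤ ∑ ω with runP (π ω) φ j = ψ, q ω * marginal p f (π ω ψ) ψ) :
    a * ∑ ω, q ω * ∑ φ, p φ * maxMarginal p f (runP (π ω) φ j)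
      ≤ ∑ ω, q ω * favg p f (π ω) (j + 1) - ∑ ω, q ω * favg p f (π ω) j := by
  simp only [← Finset.sum_sub_distrib, ← mul_sub, favg_succ_sub_favg hp]
  calc a * ∑ ω, q ω * ∑ φ, p φ * maxMarginal p f (runP (π ω) φ j)
      = ∑ φ, p φ * ∑ ω, q ω * (a * maxMarginal p f (runP (π ω) φ j)) := by
        simp only [Finset.mul_sum]
        rw [Finset.sum_comm]
        exact Finset.sum_congr rfl fun _ _ => Finset.sum_congr rfl fun _ _ => by ring
    _ ≤ ∑ φ, p φ * ∑ ω, q ω * marginal p f (π ω (runP (π ω) φ j)) (runP (π ω) φ j) :=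
        Finset.sum_le_sum fun φ _ => mul_le_mul_of_nonneg_left
          (sum_mul_le_sum_mul_of_fiberwise q (fun ω => runP (π ω) φ j)
            (fun ψ => a * maxMarginal p f ψ) (fun ω ψ => marginal p f (π ω ψ) ψ) (h φ)) (hp φ)
    _ = ∑ ω, q ω * ∑ φ, p φ * marginal p f (π ω (runP (π ω) φ j)) (runP (π ω) φ j) := by
        simp only [Finset.mul_sum]
        rw [Finset.sum_comm]
        exact Finset.sum_congr rfl fun _ _ => Finset.sum_congr rfl fun _ _ => by ring

end Randomized

theorem randomized_greedy_step_general {E O : Type*} [Fintype E] [Fintype O] [DecidableEq E]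
    [Nonempty E] {Ωr Ωr' : Type*} [Fintype Ωr] [Fintype Ωr']
    (p : (E → O) → ℝ) (hp : ∀ φ, 0 ≤ p φ)
    (f : Finset E → (E → O) → ℝ)
    (hmono : AdaptiveMonotone p f) (hsub : AdaptiveSubmodular p f)
    (q : Ωr → ℝ) (hq : ∀ ω, 0 ≤ q ω) (hq1 : ∑ ω : Ωr, q ω = 1)
    (q' : Ωr' → ℝ) (hq' : ∀ ω, 0 ≤ q' ω) (hq'1 : ∑ ω : Ωr', q' ω = 1)
    (Pag : Ωr → Policy E O) (Pstar : Ωr' → Policy E O)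
    (r : ℕ) (hr : 0 < r) (α : ℕ → ℝ) (hα : ∀ i ∈ Finset.Icc 1 r, 0 ≤ α i ∧ α i ≤ 1)
    (hgreedy : ∀ i ∈ Finset.Icc 1 r, ∀ φ : E → O, ∀ ψ : PReal E O,
      α i * maxMarginal p f ψ *
          (∑ ω ∈ Finset.univ.filter (fun ω : Ωr => runP (Pag ω) φ (i - 1) = ψ), q ω)
        ≤ ∑ ω ∈ Finset.univ.filter (fun ω : Ωr => runP (Pag ω) φ (i - 1) = ψ),
            q ω * marginal p f (Pag ω ψ) ψ)
    (i : ℕ) (hi : i ∈ Finset.Icc 1 r) :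
    (∑ ω' : Ωr', q' ω' * favg p f (Pstar ω') r) - ∑ ω : Ωr, q ω * favg p f (Pag ω) i ≤
      (1 - α i / r) *
        ((∑ ω' : Ωr', q' ω' * favg p f (Pstar ω') r)
          - ∑ ω : Ωr, q ω * favg p f (Pag ω) (i - 1)) := by
  set M := ∑ ω, q ω * ∑ φ, p φ * maxMarginal p f (runP (Pag ω) φ (i - 1))
  have hgap : (∑ ω', q' ω' * favg p f (Pstar ω') r) - ∑ ω, q ω * favg p f (Pag ω) (i - 1)
      ≤ r * M := by
    refine (sum_mul_sub_sum_mul_le hq hq1 hq' hq'1 fun ω ω' =>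
      favg_le_favg_add_mul hp hmono hsub (Pag ω) (Pstar ω') (i - 1) r).trans_eq ?_
    rw [Finset.mul_sum]
    exact Finset.sum_congr rfl fun _ _ => mul_left_comm _ _ _
  have hgain := mul_sum_maxMarginal_le_sum_favg_succ_sub hp q Pag (i - 1) (α i) (hgreedy i hi)
  rw [Nat.sub_add_cancel (Finset.mem_Icc.1 hi).1] at hgain
  have hr' : (0 : ℝ) < r := Nat.cast_pos.2 hr
  have hshare : α i / r * ((∑ ω', q' ω' * favg p f (Pstar ω') r)
      - ∑ ω, q ω * favg p f (Pag ω) (i - 1)) ≤ α i * M :=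
    calc _ ≤ α i / r * (r * M) :=
          mul_le_mul_of_nonneg_left hgap (div_nonneg (hα i hi).1 hr'.le)
      _ = α i * M := by field_simp
  linear_combination hshare + hgain

/-- (Lemma 4) Let `π^ag` be a randomized policy (internal randomness `ω` with law `q`)
that, at each round `i` and each partial realization `ψ_{i-1}`, has conditional (on the
history `Ψ_{i-1}(ω,φ) = ψ_{i-1}`) expected marginal gain at least `α_i · max_e Δ(e|ψ_{i-1})`.
If `f` is adaptive monotone and adaptive submodular, then for any randomized policy `π*`
selecting at most `r` items and any round `i` (`1 ≤ i ≤ r`):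
`E_ω[f_avg(π*(ω)) − f_avg(π^ag_i(ω))] ≤ (1 − α_i/r)·E_ω[f_avg(π*(ω)) − f_avg(π^ag_{i-1}(ω))]`. -/
theorem randomized_greedy_step {E O : Type*} [Fintype E] [Fintype O] [DecidableEq E]
    [Nonempty E] {Ωr Ωr' : Type*} [Fintype Ωr] [Fintype Ωr']
    (p : (E → O) → ℝ) (hp : ∀ φ, 0 ≤ p φ) (hp1 : ∑ φ : E → O, p φ = 1)
    (f : Finset E → (E → O) → ℝ) (hf : ∀ S φ, 0 ≤ f S φ)
    (hmono : AdaptiveMonotone p f) (hsub : AdaptiveSubmodular p f)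
    (q : Ωr → ℝ) (hq : ∀ ω, 0 ≤ q ω) (hq1 : ∑ ω : Ωr, q ω = 1)
    (q' : Ωr' → ℝ) (hq' : ∀ ω, 0 ≤ q' ω) (hq'1 : ∑ ω : Ωr', q' ω = 1)
    (Pag : Ωr → Policy E O) (Pstar : Ωr' → Policy E O)
    (r : ℕ) (hr : 0 < r) (α : ℕ → ℝ) (hα : ∀ i ∈ Finset.Icc 1 r, 0 ≤ α i ∧ α i ≤ 1)
    (hgreedy : ∀ i ∈ Finset.Icc 1 r, ∀ φ : E → O, ∀ ψ : PReal E O,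
      α i * maxMarginal p f ψ *
          (∑ ω ∈ Finset.univ.filter (fun ω : Ωr => runP (Pag ω) φ (i - 1) = ψ), q ω)
        ≤ ∑ ω ∈ Finset.univ.filter (fun ω : Ωr => runP (Pag ω) φ (i - 1) = ψ),
            q ω * marginal p f (Pag ω ψ) ψ)
    (i : ℕ) (hi : i ∈ Finset.Icc 1 r) :
    (∑ ω' : Ωr', q' ω' * favg p f (Pstar ω') r) - ∑ ω : Ωr, q ω * favg p f (Pag ω) i ≤
      (1 - α i / r) *
        ((∑ ω' : Ωr', q' ω' * favg p f (Pstar ω') r)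
          - ∑ ω : Ωr, q ω * favg p f (Pag ω) (i - 1)) :=
  randomized_greedy_step_general p hp f hmono hsub q hq hq1 q' hq' hq'1 Pag Pstar r hr α hα hgreedy
    i hi
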